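/- arXiv:2304.10536 — 2 statements merged into one kernel-verified Lean document; each statement's English description precedes it below -/
import Mathlib

section
/- (Ruhe's trace inequality.) Let A and B be n×n positive semidefinite Hermitian matrices. Then tr(AB) ≥ Σ_{i=1}^n σ_i(A)·σ_{n−i+1}(B), where σ_1(A) ≥ σ_2(A) ≥ … ≥ σ_n(A) and σ_1(B) ≥ … ≥ σ_n(B) are the singular values (equivalently, the eigenvalues) of A and B sorted in decreasing order. -/
open Finset Matrix
open scoped ComplexOrder

/-!
Diagonalize `A = U diag(λ) U*` and `B = V diag(μ) V*`. With the unitary `W = U* V`,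
`tr(AB) = Σ_{i,j} λ_i μ_j |W_ij|²`, and `(|W_ij|²)` is doubly stochastic. By Birkhoff's theorem
this linear function of the doubly stochastic matrix is at least its value at some permutation
matrix, `Σ_i λ_i μ_{π i}`, and by the rearrangement inequality every such sum is at least the
sum pairing the sorted eigenvalues of `A` with those of `B` in the opposite order.
-/

theorem Antitone.sum_mul_rev_le_sum_mul_comp_perm {α : Type*} [Semiring α] [LinearOrder α]
    [IsStrictOrderedRing α] [ExistsAddOfLE α] {n : ℕ} {f g : Fin n → α} (hf : Antitone f)
    (hg : Antitone g) (π : Equiv.Perm (Fin n)) :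
    ∑ i, f i * g i.rev ≤ ∑ i, f i * g (π i) := by
  have hfg : Antivary f (g ∘ Fin.rev) := hf.antivary fun i j h => hg (Fin.rev_le_rev.mpr h)
  simpa [Fin.rev_rev] using hfg.sum_mul_le_sum_mul_comp_perm (σ := π.trans Fin.revPerm)

namespace Matrix

variable {n : Type*} [Fintype n] [DecidableEq n]

theorem exists_perm_sum_mul_le_dotProduct_mulVec {R : Type*} [Field R] [LinearOrder R]
    [IsStrictOrderedRing R] {M : Matrix n n R} (hM : M ∈ doublyStochastic R n) (f g : n → R) :
    ∃ π : Equiv.Perm n, ∑ i, f i * g (π i) ≤ f ⬝ᵥ (M *ᵥ g) := by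
  let φ : Matrix n n R →ₗ[R] R :=
    { toFun := fun M => f ⬝ᵥ (M *ᵥ g)
      map_add' := fun M N => by simp only [add_mulVec, dotProduct_add]
      map_smul' := fun c M => by simp only [smul_mulVec, dotProduct_smul, RingHom.id_apply] }
  rw [← SetLike.mem_coe, doublyStochastic_eq_convexHull_permMatrix] at hM
  obtain ⟨_, ⟨π, rfl⟩, hπ⟩ :=
    (φ.concaveOn convex_univ).exists_le_of_mem_convexHull (Set.subset_univ _) hM
  exact ⟨π, by simpa [φ, permMatrix_mulVec, dotProduct] using hπ⟩

variable {𝕜 : Type*} [RCLike 𝕜]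

def entrywiseNormSq {m : Type*} (W : Matrix m n 𝕜) : Matrix m n ℝ := of fun i j => ‖W i j‖ ^ 2

theorem entrywiseNormSq_mem_doublyStochastic {U : Matrix n n 𝕜} (hU : U ∈ unitaryGroup n 𝕜) :
    entrywiseNormSq U ∈ doublyStochastic ℝ n := by
  have row (i : n) : ((∑ j, entrywiseNormSq U i j : ℝ) : 𝕜) = (U * star U) i i := by
    simp [entrywiseNormSq, mul_apply, RCLike.mul_conj]
  have col (j : n) : ((∑ i, entrywiseNormSq U i j : ℝ) : 𝕜) = (star U * U) j j := by
    simp [entrywiseNormSq, mul_apply, RCLike.conj_mul]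
  rw [mem_doublyStochastic_iff_sum]
  refine ⟨fun i j => sq_nonneg _, fun i => ?_, fun j => ?_⟩
  · have := row i
    rw [mem_unitaryGroup_iff.mp hU, one_apply_eq] at this
    exact_mod_cast this
  · have := col j
    rw [mem_unitaryGroup_iff'.mp hU, one_apply_eq] at this
    exact_mod_cast this

theorem trace_diagonal_mul_diagonal_mul_star (d e : n → ℝ) (W : Matrix n n 𝕜) :
    (diagonal (RCLike.ofReal ∘ d) * W * diagonal (RCLike.ofReal ∘ e) * star W).trace
      = ((d ⬝ᵥ (entrywiseNormSq W *ᵥ e) : ℝ) : 𝕜) := by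
  simp only [trace, diag, mul_apply (N := star W), mul_diagonal, diagonal_mul, star_apply,
    RCLike.star_def, dotProduct, mulVec, entrywiseNormSq, of_apply, Function.comp_apply, mul_sum]
  push_cast
  refine sum_congr rfl fun i _ => sum_congr rfl fun j _ => ?_
  rw [← RCLike.mul_conj]
  ring

theorem IsHermitian.trace_mul_eq {A B : Matrix n n 𝕜} (hA : A.IsHermitian) (hB : B.IsHermitian) :
    (A * B).trace = ((hA.eigenvalues ⬝ᵥ
      (entrywiseNormSq (star (hA.eigenvectorUnitary : Matrix n n 𝕜) *
        (hB.eigenvectorUnitary : Matrix n n 𝕜)) *ᵥ hB.eigenvalues) : ℝ) : 𝕜) := by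
  conv_lhs => rw [hA.spectral_theorem, hB.spectral_theorem]
  rw [← trace_diagonal_mul_diagonal_mul_star, star_mul, star_star]
  simp only [Unitary.conjStarAlgAut_apply, mul_assoc]
  rw [trace_mul_comm]
  simp only [mul_assoc]

theorem IsHermitian.exists_perm_sum_eigenvalues_mul_le_re_trace_mul {A B : Matrix n n 𝕜}
    (hA : A.IsHermitian) (hB : B.IsHermitian) :
    ∃ π : Equiv.Perm n,
      ∑ i, hA.eigenvalues i * hB.eigenvalues (π i) ≤ RCLike.re (A * B).trace := by
  rw [hA.trace_mul_eq hB, RCLike.ofReal_re]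
  exact exists_perm_sum_mul_le_dotProduct_mulVec (entrywiseNormSq_mem_doublyStochastic
    (mul_mem (Unitary.star_mem hA.eigenvectorUnitary.2) hB.eigenvectorUnitary.2)) _ _

end Matrix

/-- Ruhe's trace inequality: for `n×n` positive semidefinite Hermitian matrices `A` and `B`,
`tr(AB) ≥ Σ_{i=1}^n σ_i(A)·σ_{n−i+1}(B)`, where `σA` and `σB` enumerate the eigenvalues
(= singular values) of `A` and `B` sorted in decreasing order. -/
theorem ruhe_trace_inequality (n : ℕ) (A B : Matrix (Fin n) (Fin n) ℂ)
    (hA : A.PosSemidef) (hB : B.PosSemidef)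
    (σA σB : Fin n → ℝ)
    (hσA : Antitone σA) (hσB : Antitone σB)
    (hσA' : ∃ e : Equiv.Perm (Fin n), ∀ i, σA i = hA.isHermitian.eigenvalues (e i))
    (hσB' : ∃ e : Equiv.Perm (Fin n), ∀ i, σB i = hB.isHermitian.eigenvalues (e i)) :
    ∑ i, σA i * σB i.rev ≤ ((A * B).trace).re := by
  obtain ⟨eA, heA⟩ := hσA'
  obtain ⟨eB, heB⟩ := hσB'
  obtain ⟨π, hπ⟩ := hA.isHermitian.exists_perm_sum_eigenvalues_mul_le_re_trace_mul hB.isHermitian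
  calc ∑ i, σA i * σB i.rev ≤ ∑ i, σA i * σB ((eA.trans (π.trans eB.symm)) i) :=
        hσA.sum_mul_rev_le_sum_mul_comp_perm hσB _
    _ = ∑ i, hA.isHermitian.eigenvalues i * hB.isHermitian.eigenvalues (π i) :=
        Fintype.sum_equiv eA _ _ fun i => by simp [heA, heB]
    _ ≤ ((A * B).trace).re := hπ
end

section
/- (Quadratic majorizer of the sparse-prior objective.) Let γ > 0, 0 < p ≤ 2, σ > 0, y ∈ ℝ^m, A a real m×n matrix, and for i = 1, …, ℓ let G_i be a real d×n matrix and w_i ∈ ℝ^d with (w_i)_j ≥ 0. Define the objective J(x) = (1/(2σ²))·‖y − Ax‖₂² + Σ_{i=1}^ℓ Σ_{j=1}^d (w_i)_j ((G_i x)_j² + γ)^(p/2) for x ∈ ℝⁿ, and for x, x̄ ∈ ℝⁿ define Q(x; x̄) = (1/(2σ²))·‖y − Ax‖₂² + Σ_{i=1}^ℓ [ (p/2)·Σ_{j=1}^d (w_i)_j ((G_i x̄)_j² + γ)^((p−2)/2) (G_i x)_j² + (pγ/2)·Σ_{j=1}^d (w_i)_j ((G_i x̄)_j² + γ)^((p−2)/2)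 + ((2−p)/2)·Σ_{j=1}^d (w_i)_j ((G_i x̄)_j² + γ)^(p/2) ]. Then Q(x; x̄) ≥ J(x) for all x, x̄ ∈ ℝⁿ, and Q(x̄; x̄) = J(x̄) for all x̄ ∈ ℝⁿ. -/
open Finset Matrix

/-- The sparse-prior objective
`J(x) = (1/(2σ²))·‖y − Ax‖₂² + Σ_i Σ_j (w_i)_j ((G_i x)_j² + γ)^(p/2)`. -/
noncomputable def sparseObjective (m n d ℓ : ℕ) (γ p σ : ℝ) (y : Fin m → ℝ)
    (A : Matrix (Fin m) (Fin n) ℝ) (G : Fin ℓ → Matrix (Fin d) (Fin n) ℝ)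
    (w : Fin ℓ → Fin d → ℝ) (x : Fin n → ℝ) : ℝ :=
  1 / (2 * σ ^ 2) * ∑ k, (y k - (A *ᵥ x) k) ^ 2 +
    ∑ i, ∑ j, w i j * (((G i *ᵥ x) j) ^ 2 + γ) ^ (p / 2)

/-- The quadratic surrogate
`Q(x; x̄) = (1/(2σ²))·‖y − Ax‖₂² + Σ_i [ (p/2)·Σ_j (w_i)_j ((G_i x̄)_j²+γ)^((p−2)/2)(G_i x)_j²
 + (pγ/2)·Σ_j (w_i)_j ((G_i x̄)_j²+γ)^((p−2)/2)
 + ((2−p)/2)·Σ_j (w_i)_j ((G_i x̄)_j²+γ)^(p/2) ]`. -/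
noncomputable def sparseSurrogate (m n d ℓ : ℕ) (γ p σ : ℝ) (y : Fin m → ℝ)
    (A : Matrix (Fin m) (Fin n) ℝ) (G : Fin ℓ → Matrix (Fin d) (Fin n) ℝ)
    (w : Fin ℓ → Fin d → ℝ) (x xb : Fin n → ℝ) : ℝ :=
  1 / (2 * σ ^ 2) * ∑ k, (y k - (A *ᵥ x) k) ^ 2 +
    ∑ i,
      (p / 2 * ∑ j, w i j * (((G i *ᵥ xb) j) ^ 2 + γ) ^ ((p - 2) / 2) * ((G i *ᵥ x) j) ^ 2 +
        p * γ / 2 * ∑ j, w i j * (((G i *ᵥ xb) j) ^ 2 + γ) ^ ((p - 2) / 2) +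
        (2 - p) / 2 * ∑ j, w i j * (((G i *ᵥ xb) j) ^ 2 + γ) ^ (p / 2))

/-! Since `0 < p/2 ≤ 1`, the map `u ↦ u^(p/2)` is concave on `u > 0`, so it lies below its tangent
line at `ū = (G_i x̄)_j² + γ`; evaluated at `u = (G_i x)_j² + γ` that tangent line is exactly the
`(i, j)` term of the surrogate, with equality at `u = ū`. Summing with the nonnegative weights
`(w_i)_j` gives `Q(x; x̄) ≥ J(x)` and `Q(x̄; x̄) = J(x̄)`. The tangent-line bound itself is weighted
AM–GM applied to `u` and `ū` with weights `p/2` and `1 - p/2`. -/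

open Real

theorem Real.rpow_le_tangent {a b q : ℝ} (ha : 0 < a) (hb : 0 ≤ b) (hq₀ : 0 ≤ q) (hq₁ : q ≤ 1) :
    b ^ q ≤ q * a ^ (q - 1) * b + (1 - q) * a ^ q := by
  have hamgm : b ^ q * a ^ (1 - q) ≤ q * b + (1 - q) * a :=
    geom_mean_le_arith_mean2_weighted hq₀ (by linarith) hb ha.le (by ring)
  have haq : 0 < a ^ q := rpow_pos_of_pos ha q
  rw [rpow_sub ha, rpow_one] at hamgm
  rw [rpow_sub_one ha.ne']
  calc b ^ q = b ^ q * (a / a ^ q) * (a ^ q / a) := by field_simp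
    _ ≤ (q * b + (1 - q) * a) * (a ^ q / a) := by gcongr
    _ = q * (a ^ q / a) * b + (1 - q) * a ^ q := by field_simp

theorem Real.rpow_sub_one_mul_self {a : ℝ} (ha : a ≠ 0) (q : ℝ) : a ^ (q - 1) * a = a ^ q := by
  rw [rpow_sub_one ha, div_mul_cancel₀ _ ha]

noncomputable def entrySurrogate (γ p s t : ℝ) : ℝ :=
  p / 2 * (s ^ 2 + γ) ^ ((p - 2) / 2) * t ^ 2 + p * γ / 2 * (s ^ 2 + γ) ^ ((p - 2) / 2) +
    (2 - p) / 2 * (s ^ 2 + γ) ^ (p / 2)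

theorem entrySurrogate_eq_tangent (γ p s t : ℝ) :
    entrySurrogate γ p s t = p / 2 * (s ^ 2 + γ) ^ (p / 2 - 1) * (t ^ 2 + γ) +
      (1 - p / 2) * (s ^ 2 + γ) ^ (p / 2) := by
  rw [entrySurrogate, show (p - 2) / 2 = p / 2 - 1 by ring]
  ring

theorem rpow_sq_add_le_entrySurrogate {γ p : ℝ} (hγ : 0 < γ) (hp : 0 < p) (hp2 : p ≤ 2)
    (s t : ℝ) : (t ^ 2 + γ) ^ (p / 2) ≤ entrySurrogate γ p s t := by
  rw [entrySurrogate_eq_tangent]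
  exact rpow_le_tangent (by positivity) (by positivity) (by positivity) (by linarith)

theorem entrySurrogate_self {γ : ℝ} (hγ : 0 < γ) (p s : ℝ) :
    entrySurrogate γ p s s = (s ^ 2 + γ) ^ (p / 2) := by
  rw [entrySurrogate_eq_tangent, mul_assoc, rpow_sub_one_mul_self (by positivity)]
  ring

theorem sparseSurrogate_eq_sum_entrySurrogate (m n d ℓ : ℕ) (γ p σ : ℝ) (y : Fin m → ℝ)
    (A : Matrix (Fin m) (Fin n) ℝ) (G : Fin ℓ → Matrix (Fin d) (Fin n) ℝ)
    (w : Fin ℓ → Fin d → ℝ) (x xb : Fin n → ℝ) :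
    sparseSurrogate m n d ℓ γ p σ y A G w x xb =
      1 / (2 * σ ^ 2) * ∑ k, (y k - (A *ᵥ x) k) ^ 2 +
        ∑ i, ∑ j, w i j * entrySurrogate γ p ((G i *ᵥ xb) j) ((G i *ᵥ x) j) := by
  simp only [sparseSurrogate, entrySurrogate, mul_sum, ← sum_add_distrib]
  congr! 3
  ring

theorem sparse_objective_majorizer_general (m n d ℓ : ℕ) (γ p σ : ℝ)
    (hγ : 0 < γ) (hp : 0 < p) (hp2 : p ≤ 2)
    (y : Fin m → ℝ) (A : Matrix (Fin m) (Fin n) ℝ)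
    (G : Fin ℓ → Matrix (Fin d) (Fin n) ℝ)
    (w : Fin ℓ → Fin d → ℝ) (hw : ∀ i j, 0 ≤ w i j) :
    (∀ x xb : Fin n → ℝ,
      sparseSurrogate m n d ℓ γ p σ y A G w x xb ≥ sparseObjective m n d ℓ γ p σ y A G w x) ∧
    (∀ xb : Fin n → ℝ,
      sparseSurrogate m n d ℓ γ p σ y A G w xb xb = sparseObjective m n d ℓ γ p σ y A G w xb) := by
  refine ⟨fun x xb => ?_, fun xb => ?_⟩
  · rw [ge_iff_le, sparseSurrogate_eq_sum_entrySurrogate, sparseObjective]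
    gcongr with i _ j _
    exacts [hw i j, rpow_sq_add_le_entrySurrogate hγ hp hp2 _ _]
  · simp only [sparseSurrogate_eq_sum_entrySurrogate, sparseObjective, entrySurrogate_self hγ]

/-- Quadratic majorizer of the sparse-prior objective: for `γ > 0`, `0 < p ≤ 2`, `σ > 0`
and nonnegative weights, the surrogate `Q(·; x̄)` dominates `J` everywhere and touches it
at `x̄`. -/
theorem sparse_objective_majorizer (m n d ℓ : ℕ) (γ p σ : ℝ)
    (hγ : 0 < γ) (hp : 0 < p) (hp2 : p ≤ 2) (hσ : 0 < σ)
    (y : Fin m → ℝ) (A : Matrix (Fin m) (Fin n) ℝ)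
    (G : Fin ℓ → Matrix (Fin d) (Fin n) ℝ)
    (w : Fin ℓ → Fin d → ℝ) (hw : ∀ i j, 0 ≤ w i j) :
    (∀ x xb : Fin n → ℝ,
      sparseSurrogate m n d ℓ γ p σ y A G w x xb ≥ sparseObjective m n d ℓ γ p σ y A G w x) ∧
    (∀ xb : Fin n → ℝ,
      sparseSurrogate m n d ℓ γ p σ y A G w xb xb = sparseObjective m n d ℓ γ p σ y A G w xb) :=
  sparse_objective_majorizer_general m n d ℓ γ p σ hγ hp hp2 y A G w hw
end
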